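/- Let z, z' ∈ ℝ^V, p = softmax(z), q = softmax(z'), and let Π = I − (1/V)𝟏𝟏ᵀ be the orthogonal projection onto the subspace orthogonal to 𝟏. Suppose κ > 0 satisfies vᵀJ(softmax(z' + s(z−z')))v ≥ κ‖v‖₂² for all s ∈ [0,1] and all v orthogonal to 𝟏, where J(p) = diag(p) − ppᵀ. Then ‖p − q‖₂ ≥ κ‖Π(z − z')‖₂. -/

import Mathlib

open Real BigOperators Matrix

/-- Softmax on `ℝ^V`. -/
noncomputable def softmax {V : ℕ} (z : Fin V → ℝ) : Fin V → ℝ :=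
  fun i => Real.exp (z i) / ∑ j, Real.exp (z j)

/-- Softmax Jacobian `J(p) = diag(p) - p pᵀ`. -/
noncomputable def softmaxJac {V : ℕ} (p : Fin V → ℝ) : Matrix (Fin V) (Fin V) ℝ :=
  Matrix.diagonal p - Matrix.vecMulVec p p

/-- Orthogonal projection onto the subspace orthogonal to the all-ones vector:
`(proj v) i = v i - (∑ j v j) / V`. -/
noncomputable def projOne {V : ℕ} (v : Fin V → ℝ) : Fin V → ℝ :=
  fun i => v i - (∑ j, v j) / V

/-!
Along the logit segment `z' + s (z - z')` the derivative of `softmax` is `J (z - z')`, so by the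
mean value theorem `⟪v, p - q⟫ = ⟪v, J(p(s)) (z - z')⟫` for some `s ∈ (0, 1)`. Since `J(p) 𝟏 = 0`,
taking `v = Π (z - z')` turns the right side into `vᵀ J(p(s)) v ≥ κ ‖v‖²`, while Cauchy–Schwarz
bounds the left side by `‖v‖ ‖p - q‖`.
-/

open Finset

lemma sum_exp_pos {V : ℕ} (hV : 0 < V) (z : Fin V → ℝ) : 0 < ∑ j, exp (z j) :=
  sum_pos (fun j _ => exp_pos (z j)) ⟨⟨0, hV⟩, mem_univ _⟩

lemma sum_softmax {V : ℕ} (hV : 0 < V) (z : Fin V → ℝ) : ∑ i, softmax z i = 1 := by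
  simp only [softmax, ← sum_div]
  exact div_self (sum_exp_pos hV z).ne'

lemma sum_projOne {V : ℕ} (v : Fin V → ℝ) : ∑ i, projOne v i = 0 := by
  rcases Nat.eq_zero_or_pos V with rfl | hV
  · simp
  · simp only [projOne, sum_sub_distrib, sum_const, card_univ, Fintype.card_fin, nsmul_eq_mul]
    rw [mul_div_cancel₀ _ (Nat.cast_pos.mpr hV).ne', sub_self]

lemma projOne_add_const {V : ℕ} (v : Fin V → ℝ) : projOne v + (fun _ => (∑ j, v j) / V) = v := by
  ext i
  simp [projOne]

lemma softmaxJac_mulVec_apply {V : ℕ} (p d : Fin V → ℝ) (i : Fin V) :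
    (softmaxJac p *ᵥ d) i = p i * d i - p i * (p ⬝ᵥ d) := by
  simp [softmaxJac, sub_mulVec, mulVec_diagonal, vecMulVec_mulVec, mul_comm]

lemma softmaxJac_mulVec_const {V : ℕ} {p : Fin V → ℝ} (hp : ∑ i, p i = 1) (c : ℝ) :
    softmaxJac p *ᵥ (fun _ => c) = 0 := by
  ext i
  simp [softmaxJac_mulVec_apply, dotProduct, ← sum_mul, hp]

lemma softmaxJac_mulVec_projOne {V : ℕ} {p : Fin V → ℝ} (hp : ∑ i, p i = 1) (v : Fin V → ℝ) :
    softmaxJac p *ᵥ projOne v = softmaxJac p *ᵥ v := by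
  conv_rhs => rw [← projOne_add_const v]
  rw [mulVec_add, softmaxJac_mulVec_const hp, add_zero]

lemma hasDerivAt_softmax_line {V : ℕ} (hV : 0 < V) (a d : Fin V → ℝ) (i : Fin V) (s : ℝ) :
    HasDerivAt (fun t => softmax (a + t • d) i) ((softmaxJac (softmax (a + s • d)) *ᵥ d) i) s := by
  have hexp (j : Fin V) :
      HasDerivAt (fun t => exp ((a + t • d) j)) (exp ((a + s • d) j) * d j) s := by
    have hline : HasDerivAt (fun t => (a + t • d) j) (d j) s := by
      simpa using ((hasDerivAt_id s).mul_const (d j)).const_add (a j)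
    exact hline.exp
  refine ((hexp i).div (HasDerivAt.fun_sum fun j _ => hexp j) (sum_exp_pos hV _).ne').congr_deriv ?_
  rw [softmaxJac_mulVec_apply]
  simp only [softmax, dotProduct, div_mul_eq_mul_div, ← sum_div]
  field_simp

lemma hasDerivAt_dotProduct_softmax_line {V : ℕ} (hV : 0 < V) (w a d : Fin V → ℝ) (s : ℝ) :
    HasDerivAt (fun t => w ⬝ᵥ softmax (a + t • d))
      (w ⬝ᵥ (softmaxJac (softmax (a + s • d)) *ᵥ d)) s :=
  HasDerivAt.fun_sum fun i _ => (hasDerivAt_softmax_line hV a d i s).const_mul (w i)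

lemma exists_dotProduct_softmax_sub_eq {V : ℕ} (hV : 0 < V) (w z z' : Fin V → ℝ) :
    ∃ s ∈ Set.Ioo (0 : ℝ) 1,
      w ⬝ᵥ (softmaxJac (softmax (z' + s • (z - z'))) *ᵥ (z - z')) =
        w ⬝ᵥ (softmax z - softmax z') := by
  have hderiv := hasDerivAt_dotProduct_softmax_line hV w z' (z - z')
  obtain ⟨s, hs, hslope⟩ := exists_hasDerivAt_eq_slope _ _ zero_lt_one
    (fun t _ => (hderiv t).continuousAt.continuousWithinAt) (fun t _ => hderiv t)
  refine ⟨s, hs, ?_⟩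
  simpa [dotProduct_sub] using hslope

lemma mul_le_of_mul_sq_le_mul {κ a b : ℝ} (ha : 0 ≤ a) (hb : 0 ≤ b) (h : κ * a ^ 2 ≤ a * b) :
    κ * a ≤ b := by
  rcases ha.eq_or_lt with rfl | ha
  · simpa using hb
  · exact le_of_mul_le_mul_left (by linarith) ha

theorem softmax_diff_lower_bound_general {V : ℕ} (hV : 0 < V) (z z' : Fin V → ℝ) (κ : ℝ)
    (hκ : ∀ s ∈ Set.Icc (0:ℝ) 1, ∀ v : Fin V → ℝ, (∑ i, v i) = 0 →
      κ * ∑ i, v i ^ 2 ≤ v ⬝ᵥ (softmaxJac (softmax (z' + s • (z - z'))) *ᵥ v)) :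
    κ * Real.sqrt (∑ i, projOne (z - z') i ^ 2) ≤
      Real.sqrt (∑ i, (softmax z i - softmax z' i) ^ 2) := by
  set v := projOne (z - z')
  obtain ⟨s, hs, hmvt⟩ := exists_dotProduct_softmax_sub_eq hV v z z'
  have hcurv : κ * ∑ i, v i ^ 2 ≤ v ⬝ᵥ (softmax z - softmax z') :=
    calc κ * ∑ i, v i ^ 2
        ≤ v ⬝ᵥ (softmaxJac (softmax (z' + s • (z - z'))) *ᵥ v) :=
          hκ s (Set.Ioo_subset_Icc_self hs) v (sum_projOne _)
      _ = v ⬝ᵥ (softmax z - softmax z') := by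
          rw [softmaxJac_mulVec_projOne (sum_softmax hV _), hmvt]
  have hCS := Real.sum_mul_le_sqrt_mul_sqrt univ v (softmax z - softmax z')
  refine mul_le_of_mul_sq_le_mul (sqrt_nonneg _) (sqrt_nonneg _) ?_
  rw [sq_sqrt (by positivity)]
  exact hcurv.trans hCS

/-- If the softmax Jacobian has curvature at least `κ > 0` on `𝟏^⊥` along the logit segment,
then `‖softmax z - softmax z'‖₂ ≥ κ ‖Π(z - z')‖₂`. -/
theorem softmax_diff_lower_bound {V : ℕ} (hV : 0 < V) (z z' : Fin V → ℝ) (κ : ℝ) (hκpos : 0 < κ)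
    (hκ : ∀ s ∈ Set.Icc (0:ℝ) 1, ∀ v : Fin V → ℝ, (∑ i, v i) = 0 →
      κ * ∑ i, v i ^ 2 ≤ v ⬝ᵥ (softmaxJac (softmax (z' + s • (z - z'))) *ᵥ v)) :
    κ * Real.sqrt (∑ i, projOne (z - z') i ^ 2) ≤
      Real.sqrt (∑ i, (softmax z i - softmax z' i) ^ 2) :=
  softmax_diff_lower_bound_general hV z z' κ hκ
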